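/- Let G be a tripartite simple graph with vertex partition (A, B, C) such that A, B, C are independent sets, and let G'' be the graph obtained from G as follows: add all edges inside A, inside B, and inside C (turning each part into a clique), and add three new vertices r_A, r_B, r_C, where r_A is adjacent exactly to all vertices of A, r_B to all vertices of B, and r_C to all vertices of C. Then for every set U ⊆ A ∪ B ∪ C, U is a vertex cover of G if and only if no path of G'' − U connects two distinct vertices of {r_A, r_B, r_C}. -/

import Mathlib

/-! The equivalence holds for any partition of `G` into independent parts `P i`, each turned into
a clique and given a root `r_i`. If `U` covers `G`, every edge of `G'' − U` lies inside a part or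
joins a part to its root, so the part index is constant on the components of `G'' − U` and
distinct roots are separated. Conversely, an uncovered edge `uv` with `u ∈ P i`, `v ∈ P j` has
`i ≠ j` because the parts are independent, and `r_i, u, v, r_j` is a path of `G'' − U`. -/

/-- The graph `G''` built from a tripartite graph `G` with parts `A, B, C`: each part is turned
into a clique and new vertices `r_A = Sum.inr 0`, `r_B = Sum.inr 1`, `r_C = Sum.inr 2` are
adjacent exactly to the vertices of `A`, `B`, `C` respectively. -/
def Gpp {V : Type*} (G : SimpleGraph V) (A B C : Set V) : SimpleGraph (V ⊕ Fin 3) :=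
  SimpleGraph.fromRel fun a b =>
    match a, b with
    | Sum.inl u, Sum.inl v =>
        G.Adj u v ∨ (u ∈ A ∧ v ∈ A) ∨ (u ∈ B ∧ v ∈ B) ∨ (u ∈ C ∧ v ∈ C)
    | Sum.inl u, Sum.inr i => (i = 0 ∧ u ∈ A) ∨ (i = 1 ∧ u ∈ B) ∨ (i = 2 ∧ u ∈ C)
    | _, _ => False

namespace SimpleGraph

variable {V W ι : Type*}

theorem Reachable.apply_eq_of_forall_adj {H : SimpleGraph W} {α : Type*} {f : W → α}
    (hf : ∀ x y, H.Adj x y → f x = f y) {x y : W} (h : H.Reachable x y) : f x = f y := by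
  obtain ⟨p⟩ := h
  induction p with
  | nil => rfl
  | cons hadj _ ih => exact (hf _ _ hadj).trans ih

/-- The graph `G''` of the statement for an arbitrary family of parts, with root `r_i = inr i`. -/
def partRootGraph (G : SimpleGraph V) (P : ι → Set V) : SimpleGraph (V ⊕ ι) where
  Adj
    | .inl u, .inl v => u ≠ v ∧ (G.Adj u v ∨ ∃ i, u ∈ P i ∧ v ∈ P i)
    | .inl u, .inr i => u ∈ P i
    | .inr i, .inl u => u ∈ P i
    | .inr _, .inr _ => False
  symm := ⟨by
    rintro (u | i) (v | j) h
    exacts [⟨h.1.symm, h.2.imp G.adj_symm fun ⟨i, hu, hv⟩ => ⟨i, hv, hu⟩⟩, h, h, h]⟩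
  loopless := ⟨by
    rintro (u | i) h
    exacts [h.1 rfl, h]⟩

variable {G : SimpleGraph V} {P : ι → Set V} {U : Set V}

@[simp] theorem partRootGraph_adj_inl_inl {u v : V} :
    (partRootGraph G P).Adj (.inl u) (.inl v) ↔ u ≠ v ∧ (G.Adj u v ∨ ∃ i, u ∈ P i ∧ v ∈ P i) :=
  .rfl

@[simp] theorem partRootGraph_adj_inl_inr {u : V} {i : ι} :
    (partRootGraph G P).Adj (.inl u) (.inr i) ↔ u ∈ P i := .rfl

@[simp] theorem partRootGraph_adj_inr_inl {u : V} {i : ι} :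
    (partRootGraph G P).Adj (.inr i) (.inl u) ↔ u ∈ P i := .rfl

@[simp] theorem partRootGraph_not_adj_inr_inr {i j : ι} :
    ¬(partRootGraph G P).Adj (.inr i) (.inr j) := id

theorem IsVertexCover.eq_of_reachable_inr_inr (hdisj : Pairwise (Function.onFun Disjoint P))
    (hcov : ∀ v, ∃ i, v ∈ P i) (hU : G.IsVertexCover U) {i j : ι}
    {hi : (.inr i : V ⊕ ι) ∈ (Sum.inl '' U)ᶜ} {hj : (.inr j : V ⊕ ι) ∈ (Sum.inl '' U)ᶜ}
    (h : ((partRootGraph G P).induce (Sum.inl '' U)ᶜ).Reachable ⟨.inr i, hi⟩ ⟨.inr j, hj⟩) :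
    i = j := by
  choose part hpart using hcov
  have part_eq {u : V} {i : ι} (hu : u ∈ P i) : part u = i := by
    by_contra hne
    exact Set.disjoint_left.mp (hdisj hne) (hpart u) hu
  have label_eq_of_adj : ∀ x y : ↥((Sum.inl '' U : Set (V ⊕ ι))ᶜ),
      ((partRootGraph G P).induce (Sum.inl '' U)ᶜ).Adj x y →
        Sum.elim part id x.1 = Sum.elim part id y.1 := by
    rintro ⟨u | i, hx⟩ ⟨v | j, hy⟩ hxy
    · obtain ⟨-, hG | ⟨k, hu, hv⟩⟩ := hxy
      · exact absurd (hU hG) (by simp_all)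
      · simp [part_eq hu, part_eq hv]
    · simp [part_eq hxy]
    · simp [part_eq hxy]
    · exact hxy.elim
  simpa using h.apply_eq_of_forall_adj label_eq_of_adj

theorem reachable_inr_inr_of_adj {u v : V} {i j : ι} (huv : G.Adj u v) (hu : u ∈ P i)
    (hv : v ∈ P j) (huU : u ∉ U) (hvU : v ∉ U)
    {hi : (.inr i : V ⊕ ι) ∈ (Sum.inl '' U)ᶜ} {hj : (.inr j : V ⊕ ι) ∈ (Sum.inl '' U)ᶜ} :
    ((partRootGraph G P).induce (Sum.inl '' U)ᶜ).Reachable ⟨.inr i, hi⟩ ⟨.inr j, hj⟩ := by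
  have hu' : (Sum.inl u : V ⊕ ι) ∈ (Sum.inl '' U)ᶜ := by simpa
  have hv' : (Sum.inl v : V ⊕ ι) ∈ (Sum.inl '' U)ᶜ := by simpa
  have h₁ : ((partRootGraph G P).induce (Sum.inl '' U)ᶜ).Adj ⟨.inr i, hi⟩ ⟨.inl u, hu'⟩ := hu
  have h₂ : ((partRootGraph G P).induce (Sum.inl '' U)ᶜ).Adj ⟨.inl u, hu'⟩ ⟨.inl v, hv'⟩ :=
    ⟨huv.ne, .inl huv⟩
  have h₃ : ((partRootGraph G P).induce (Sum.inl '' U)ᶜ).Adj ⟨.inl v, hv'⟩ ⟨.inr j, hj⟩ := hv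
  exact (h₁.reachable.trans h₂.reachable).trans h₃.reachable

theorem isVertexCover_iff_roots_not_reachable (hdisj : Pairwise (Function.onFun Disjoint P))
    (hcov : ∀ v, ∃ i, v ∈ P i) (hind : ∀ i, G.IsIndepSet (P i)) (U : Set V) :
    G.IsVertexCover U ↔
      ∀ a b : ↥((Sum.inl '' U : Set (V ⊕ ι))ᶜ),
        (∃ i, (a : V ⊕ ι) = .inr i) → (∃ j, (b : V ⊕ ι) = .inr j) →
        a ≠ b → ¬((partRootGraph G P).induce (Sum.inl '' U)ᶜ).Reachable a b := by
  constructor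
  · rintro hU ⟨_, ha⟩ ⟨_, hb⟩ ⟨i, rfl⟩ ⟨j, rfl⟩ hab h
    obtain rfl := hU.eq_of_reachable_inr_inr hdisj hcov h
    exact hab rfl
  · intro h u v huv
    by_contra! hUuv
    obtain ⟨i, hu⟩ := hcov u
    obtain ⟨j, hv⟩ := hcov v
    have hij : i ≠ j := by
      rintro rfl
      exact hind i hu hv huv.ne huv
    exact h ⟨.inr i, by simp⟩ ⟨.inr j, by simp⟩ ⟨i, rfl⟩ ⟨j, rfl⟩ (by simpa using hij)
      (reachable_inr_inr_of_adj huv hu hv hUuv.1 hUuv.2)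

end SimpleGraph

theorem gpp_eq_partRootGraph {V : Type*} (G : SimpleGraph V) (A B C : Set V) :
    Gpp G A B C = G.partRootGraph ![A, B, C] := by
  ext (u | i) (v | j)
  · simp [Gpp, Fin.exists_fin_succ, G.adj_comm v u]
    tauto
  · fin_cases j <;> simp [Gpp]
  · fin_cases i <;> simp [Gpp]
  · simp [Gpp]

theorem stmt13_general {V : Type*} (G : SimpleGraph V) (A B C : Set V)
    (hcov : A ∪ B ∪ C = Set.univ)
    (hAB : Disjoint A B) (hAC : Disjoint A C) (hBC : Disjoint B C)
    (hA : A.Pairwise fun u v => ¬ G.Adj u v)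
    (hB : B.Pairwise fun u v => ¬ G.Adj u v)
    (hC : C.Pairwise fun u v => ¬ G.Adj u v)
    (U : Set V) :
    (∀ u v : V, G.Adj u v → u ∈ U ∨ v ∈ U) ↔
      (∀ a b : ↥((Sum.inl '' U : Set (V ⊕ Fin 3))ᶜ),
        (∃ i : Fin 3, (a : V ⊕ Fin 3) = Sum.inr i) → (∃ j : Fin 3, (b : V ⊕ Fin 3) = Sum.inr j) →
        a ≠ b → ¬ ((Gpp G A B C).induce (Sum.inl '' U : Set (V ⊕ Fin 3))ᶜ).Reachable a b) := by
  have hdisj : Pairwise (Function.onFun Disjoint ![A, B, C]) := by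
    intro i j hij
    fin_cases i <;> fin_cases j <;> simp_all [Function.onFun, disjoint_comm]
  have hcov' (v : V) : ∃ i, v ∈ ![A, B, C] i := by
    have hv : v ∈ A ∪ B ∪ C := hcov ▸ Set.mem_univ v
    simpa [Fin.exists_fin_succ, or_assoc] using hv
  have hind (i : Fin 3) : G.IsIndepSet (![A, B, C] i) := by
    fin_cases i
    exacts [hA, hB, hC]
  rw [gpp_eq_partRootGraph]
  exact SimpleGraph.isVertexCover_iff_roots_not_reachable hdisj hcov' hind U

/-- For a tripartite graph `G` with independent parts `A, B, C` and the graph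
`G''` described above, a set `U ⊆ A ∪ B ∪ C` is a vertex cover of `G` if and only if no path of
`G'' − U` connects two distinct vertices of `{r_A, r_B, r_C}`. -/
theorem stmt13 {V : Type*} (G : SimpleGraph V) (A B C : Set V)
    (hcov : A ∪ B ∪ C = Set.univ)
    (hAB : Disjoint A B) (hAC : Disjoint A C) (hBC : Disjoint B C)
    (hA : A.Pairwise fun u v => ¬ G.Adj u v)
    (hB : B.Pairwise fun u v => ¬ G.Adj u v)
    (hC : C.Pairwise fun u v => ¬ G.Adj u v)
    (U : Set V) (hU : U ⊆ A ∪ B ∪ C) :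
    (∀ u v : V, G.Adj u v → u ∈ U ∨ v ∈ U) ↔
      (∀ a b : ↥((Sum.inl '' U : Set (V ⊕ Fin 3))ᶜ),
        (∃ i : Fin 3, (a : V ⊕ Fin 3) = Sum.inr i) → (∃ j : Fin 3, (b : V ⊕ Fin 3) = Sum.inr j) →
        a ≠ b → ¬ ((Gpp G A B C).induce (Sum.inl '' U : Set (V ⊕ Fin 3))ᶜ).Reachable a b) :=
  stmt13_general G A B C hcov hAB hAC hBC hA hB hC U
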